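/- arXiv:1907.03720 — 8 statements merged into one kernel-verified Lean document; each statement's English description precedes it below -/
import Mathlib

section
/- For x ∈ [0,1/2], define the shrinkage factor ρ(x) = (1 − x) + (x(x − 2x²) + x(1 − x)(x − 2x²))/(2x³ − 4x² + 1). Then ρ(x) ≤ 1 for every x ∈ [0,1/2]. -/
theorem shrinkage_factor_le_one (x : ℝ) (hx0 : 0 ≤ x) (hx1 : x ≤ 1/2) :
    (1 - x) + (x*(x - 2*x^2) + x*(1 - x)*(x - 2*x^2)) / (2*x^3 - 4*x^2 + 1) ≤ 1 := by
  have hd : 0 < 2*x^3 - 4*x^2 + 1 := by nlinarith [sq_nonneg x, sq_nonneg (1 - 2*x), sq_nonneg (x - 1/2)]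
  have h : (x*(x - 2*x^2) + x*(1 - x)*(x - 2*x^2)) / (2*x^3 - 4*x^2 + 1) ≤ x := by
    rw [div_le_iff₀ hd]
    nlinarith [sq_nonneg (1 - x), mul_nonneg hx0 (sq_nonneg (1 - x))]
  linarith
end

section
/- For x ∈ [0,1/2], define the shrinkage factor ρ(x) = (1 − x) + (x(x − 2x²) + x(1 − x)(x − 2x²))/(2x³ − 4x² + 1). Then ρ(x) < 1 for every x ∈ (0,1/2], i.e., any internal selfish miner with strictly positive computational power strictly weakens the original system. -/
theorem shrinkage_factor_lt_one (x : ℝ) (hx0 : 0 < x) (hx1 : x ≤ 1/2) :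
    (1 - x) + (x*(x - 2*x^2) + x*(1 - x)*(x - 2*x^2)) / (2*x^3 - 4*x^2 + 1) < 1 := by
  have hD : 0 < 2*x^3 - 4*x^2 + 1 := by nlinarith
  have key : (x*(x - 2*x^2) + x*(1 - x)*(x - 2*x^2)) / (2*x^3 - 4*x^2 + 1) < x := by
    rw [div_lt_iff₀ hD]
    nlinarith [mul_pos hx0 (pow_pos (by linarith : (0:ℝ) < 1 - x) 2)]
  linarith
end

section
/- For x ∈ [0,1/2], define the shrinkage factor ρ(x) = (1 − x) + (x(x − 2x²) + x(1 − x)(x − 2x²))/(2x³ − 4x² + 1). Then ρ is strictly decreasing on [0,1/2]: for all x, y with 0 ≤ x < y ≤ 1/2, ρ(y) < ρ(x). -/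
/-!
Clearing denominators, `ρ(x) = 1/2 + (1 - 2x) / (2 D(x))` with `D(x) = 2x³ - 4x² + 1`, so it
suffices that `(1 - 2x) / D(x)` is strictly decreasing on `[0, 1/2]`. Division with remainder gives
`D(x) = (1 - 2x) q(x) + 1/4` with `q(x) = -x² + 3x/2 + 3/4` increasing there, and cross-multiplying
then yields
`(1 - 2x) D(y) - (1 - 2y) D(x) = (y - x) ((1 - 2x)(1 - 2y)(3/2 - x - y) + 1/2)`,
which is positive for `0 ≤ x < y ≤ 1/2`.
-/

open Set

noncomputable def shrinkageFactor (x : ℝ) : ℝ :=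
  (1 - x) + (x*(x - 2*x^2) + x*(1 - x)*(x - 2*x^2)) / (2*x^3 - 4*x^2 + 1)

lemma shrinkage_denom_pos {x : ℝ} (hx0 : 0 ≤ x) (hx : x ≤ 1/2) : 0 < 2*x^3 - 4*x^2 + 1 := by
  have hq : 0 ≤ -x^2 + 3/2*x + 3/4 := by nlinarith
  have hdiv : 2*x^3 - 4*x^2 + 1 = (1 - 2*x) * (-x^2 + 3/2*x + 3/4) + 1/4 := by ring
  rw [hdiv]
  have := mul_nonneg (by linarith : (0:ℝ) ≤ 1 - 2*x) hq
  linarith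

lemma shrinkageFactor_eq {x : ℝ} (hD : 2*x^3 - 4*x^2 + 1 ≠ 0) :
    shrinkageFactor x = 1/2 + (1 - 2*x) / (2*x^3 - 4*x^2 + 1) / 2 := by
  unfold shrinkageFactor
  set D := 2*x^3 - 4*x^2 + 1 with hD_def
  field_simp
  rw [hD_def]
  ring

lemma strictAntiOn_one_sub_two_mul_div_shrinkage_denom :
    StrictAntiOn (fun x : ℝ => (1 - 2*x) / (2*x^3 - 4*x^2 + 1)) (Icc 0 (1/2)) := by
  rintro x ⟨hx0, hx⟩ y ⟨hy0, hy⟩ hxy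
  rw [div_lt_div_iff₀ (shrinkage_denom_pos hy0 hy) (shrinkage_denom_pos hx0 hx), ← sub_pos]
  have hcross : (1 - 2*x) * (2*y^3 - 4*y^2 + 1) - (1 - 2*y) * (2*x^3 - 4*x^2 + 1)
      = (y - x) * ((1 - 2*x) * (1 - 2*y) * (3/2 - x - y) + 1/2) := by ring
  rw [hcross]
  refine mul_pos (sub_pos.mpr hxy) ?_
  have := mul_nonneg (mul_nonneg (by linarith : (0:ℝ) ≤ 1 - 2*x) (by linarith : (0:ℝ) ≤ 1 - 2*y))
    (by linarith : (0:ℝ) ≤ 3/2 - x - y)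
  linarith

lemma shrinkageFactor_strictAntiOn : StrictAntiOn shrinkageFactor (Icc 0 (1/2)) := by
  intro x hx y hy hxy
  rw [shrinkageFactor_eq (shrinkage_denom_pos hx.1 hx.2).ne',
    shrinkageFactor_eq (shrinkage_denom_pos hy.1 hy.2).ne']
  linarith [strictAntiOn_one_sub_two_mul_div_shrinkage_denom hx hy hxy]

theorem shrinkage_factor_strict_anti (x y : ℝ)
    (hx0 : 0 ≤ x) (hxy : x < y) (hy : y ≤ 1/2) :
    (1 - y) + (y*(y - 2*y^2) + y*(1 - y)*(y - 2*y^2)) / (2*y^3 - 4*y^2 + 1) <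
    (1 - x) + (x*(x - 2*x^2) + x*(1 - x)*(x - 2*x^2)) / (2*x^3 - 4*x^2 + 1) :=
  shrinkageFactor_strictAntiOn ⟨hx0, hxy.le.trans hy⟩ ⟨hx0.trans hxy.le, hy⟩ hxy
end

section
/- Let β'' ∈ (0,1/2), α'' = 1 − β'', D = 2β''³ − 4β''² + 1, c = (β'' − 2β''²)/D, and let τ₂ be a real number with β'' ≤ τ₂ < 1. Define R_ex = c·(2β''α'' + (τ₂ − β'')α'' + 2β'' + β''²/(α'' − β'')) and R_others = c·((τ₂ − β'')α'' + 2(1 − τ₂)α'' + α''/β''). Then R_ex/(R_ex + R_others) > β'' if and only if α'' < β''(2 − β'' − τ₂)/(1 − τ₂). -/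
/-!
Scaling both revenues by the common factor `c > 0` does not change the relative revenue. The
`τ₂`-terms cancel in `R_ex + R_others`, which is therefore positive, so `RR > β` is equivalent to
`α·R_ex > β·R_others`. Clearing denominators, `α·R_ex − β·R_others` is
`c·α/(α − β)` times `β(2 − β − τ₂) − α(1 − τ₂)`, whose sign is exactly the claimed criterion.
-/

theorem lt_div_add_iff {K : Type*} [Field K] [LinearOrder K] [IsStrictOrderedRing K] {p x y : K}
    (hxy : 0 < x + y) : p < x / (x + y) ↔ p * y < (1 - p) * x := by
  rw [lt_div_iff₀ hxy]
  constructor <;> intro h <;> linarith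

namespace SelfishMining

/- The revenues `R_ex / c` and `R_others / c` of the paper, with `α = 1 - β` substituted. -/
noncomputable def revenueEx (β τ : ℝ) : ℝ :=
  2*β*(1 - β) + (τ - β)*(1 - β) + 2*β + β^2/((1 - β) - β)

noncomputable def revenueOthers (β τ : ℝ) : ℝ :=
  (τ - β)*(1 - β) + 2*(1 - τ)*(1 - β) + (1 - β)/β

variable {β : ℝ}

theorem revenueEx_add_revenueOthers (τ : ℝ) :
    revenueEx β τ + revenueOthers β τ = (1 - β)*(2 + 1/β) + 2*β + β^2/(1 - 2*β) := by
  unfold revenueEx revenueOthers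
  ring

theorem revenueEx_add_revenueOthers_pos (hβ0 : 0 < β) (hβ1 : β < 1/2) (τ : ℝ) :
    0 < revenueEx β τ + revenueOthers β τ := by
  have h2β : 0 < 1 - 2*β := by linarith
  rw [revenueEx_add_revenueOthers]
  have : 0 < (1 - β)*(2 + 1/β) := mul_pos (by linarith) (by positivity)
  positivity

theorem one_sub_mul_revenueEx_sub_mul_revenueOthers (hβ : β ≠ 0) (hαβ : (1 - β) - β ≠ 0)
    (τ : ℝ) :
    (1 - β) * revenueEx β τ - β * revenueOthers β τ
      = (1 - β)/((1 - β) - β) * (β*(2 - β - τ) - (1 - β)*(1 - τ)) := by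
  unfold revenueEx revenueOthers
  field_simp
  ring

theorem selfishMiningFactor_pos (hβ0 : 0 < β) (hβ1 : β < 1/2) :
    0 < (β - 2*β^2) / (2*β^3 - 4*β^2 + 1) := by
  have h2β : 0 < 1 - 2*β := by linarith
  have hnum : 0 < β - 2*β^2 := by nlinarith
  have hden : 0 < 2*β^3 - 4*β^2 + 1 := by nlinarith
  positivity

end SelfishMining

open SelfishMining in
theorem profitability_criterion_general (β'' : ℝ) (hβ0 : 0 < β'') (hβ1 : β'' < 1/2)
    (α'' : ℝ) (hα : α'' = 1 - β'') (D : ℝ) (hD : D = 2*β''^3 - 4*β''^2 + 1)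
    (c : ℝ) (hc : c = (β'' - 2*β''^2) / D)
    (τ₂ : ℝ) (hτ1 : τ₂ < 1)
    (Rex Rothers : ℝ)
    (hRex : Rex = c * (2*β''*α'' + (τ₂ - β'')*α'' + 2*β'' + β''^2/(α'' - β'')))
    (hRothers : Rothers = c * ((τ₂ - β'')*α'' + 2*(1 - τ₂)*α'' + α''/β'')) :
    Rex / (Rex + Rothers) > β'' ↔ α'' < β''*(2 - β'' - τ₂)/(1 - τ₂) := by
  subst hα hD
  have hc_pos : 0 < c := hc ▸ selfishMiningFactor_pos hβ0 hβ1
  have hαβ : 0 < (1 - β'') - β'' := by linarith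
  have hRR : Rex / (Rex + Rothers)
      = revenueEx β'' τ₂ / (revenueEx β'' τ₂ + revenueOthers β'' τ₂) := by
    rw [hRex, hRothers, ← mul_add, mul_div_mul_left _ _ hc_pos.ne']
    rfl
  rw [gt_iff_lt, hRR, lt_div_add_iff (revenueEx_add_revenueOthers_pos hβ0 hβ1 τ₂), ← sub_pos,
    one_sub_mul_revenueEx_sub_mul_revenueOthers hβ0.ne' hαβ.ne' τ₂,
    mul_pos_iff_of_pos_left (div_pos (by linarith) hαβ), lt_div_iff₀ (by linarith), sub_pos]

theorem profitability_criterion (β'' : ℝ) (hβ0 : 0 < β'') (hβ1 : β'' < 1/2)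
    (α'' : ℝ) (hα : α'' = 1 - β'') (D : ℝ) (hD : D = 2*β''^3 - 4*β''^2 + 1)
    (c : ℝ) (hc : c = (β'' - 2*β''^2) / D)
    (τ₂ : ℝ) (hτ0 : β'' ≤ τ₂) (hτ1 : τ₂ < 1)
    (Rex Rothers : ℝ)
    (hRex : Rex = c * (2*β''*α'' + (τ₂ - β'')*α'' + 2*β'' + β''^2/(α'' - β'')))
    (hRothers : Rothers = c * ((τ₂ - β'')*α'' + 2*(1 - τ₂)*α'' + α''/β'')) :
    Rex / (Rex + Rothers) > β'' ↔ α'' < β''*(2 - β'' - τ₂)/(1 - τ₂) :=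
  profitability_criterion_general β'' hβ0 hβ1 α'' hα D hD c hc τ₂ hτ1 Rex Rothers hRex hRothers
end

section
/- Let β'' ∈ (0,1/2), α'' = 1 − β'', D = 2β''³ − 4β''² + 1, c = (β'' − 2β''²)/D, and let τ₂ be a real number with β'' ≤ τ₂ < 1. Define R_ex = c·(2β''α'' + (τ₂ − β'')α'' + 2β'' + β''²/(α'' − β'')) and R_others = c·((τ₂ − β'')α'' + 2(1 − τ₂)α'' + α''/β''). Then R_ex/(R_ex + R_others) = β'' if and only if α'' = β''(2 − β'' − τ₂)/(1 − τ₂). -/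
theorem profitability_equality_case (β'' : ℝ) (hβ0 : 0 < β'') (hβ1 : β'' < 1/2)
    (α'' : ℝ) (hα : α'' = 1 - β'') (D : ℝ) (hD : D = 2*β''^3 - 4*β''^2 + 1)
    (c : ℝ) (hc : c = (β'' - 2*β''^2) / D)
    (τ₂ : ℝ) (hτ0 : β'' ≤ τ₂) (hτ1 : τ₂ < 1)
    (Rex Rothers : ℝ)
    (hRex : Rex = c * (2*β''*α'' + (τ₂ - β'')*α'' + 2*β'' + β''^2/(α'' - β'')))
    (hRothers : Rothers = c * ((τ₂ - β'')*α'' + 2*(1 - τ₂)*α'' + α''/β'')) :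
    Rex / (Rex + Rothers) = β'' ↔ α'' = β''*(2 - β'' - τ₂)/(1 - τ₂) := by
  subst hα hD hRex hRothers
  have h2β : (0:ℝ) < 1 - 2*β'' := by linarith
  have hτ : (0:ℝ) < 1 - τ₂ := by linarith
  have hDpos : (0:ℝ) < 2*β''^3 - 4*β''^2 + 1 := by nlinarith
  have hcpos : 0 < c := by
    rw [hc]; exact div_pos (by nlinarith) hDpos
  clear hc
  have hsub : (1 - β'') - β'' = 1 - 2*β'' := by ring
  have hRexpos : 0 < c * (2*β''*(1-β'') + (τ₂ - β'')*(1-β'') + 2*β'' + β''^2/((1-β'') - β'')) := by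
    apply mul_pos hcpos
    have : 0 < β''^2/((1-β'') - β'') := by
      rw [hsub]; exact div_pos (by positivity) h2β
    nlinarith
  have hRotpos : 0 < c * ((τ₂ - β'')*(1-β'') + 2*(1 - τ₂)*(1-β'') + (1-β'')/β'') := by
    apply mul_pos hcpos
    have : 0 < (1-β'')/β'' := div_pos (by linarith) hβ0
    nlinarith
  set Rex := c * (2*β''*(1-β'') + (τ₂ - β'')*(1-β'') + 2*β'' + β''^2/((1-β'') - β'')) with hR1
  set Rot := c * ((τ₂ - β'')*(1-β'') + 2*(1 - τ₂)*(1-β'') + (1-β'')/β'') with hR2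
  have hS : 0 < Rex + Rot := by linarith
  have key : Rex - β'' * (Rex + Rot)
      = c * (1 - β'') * (3*β'' + τ₂ - β''^2 - 2*β''*τ₂ - 1) / (1 - 2*β'') := by
    rw [hR1, hR2, hsub]
    field_simp
    ring
  have hiff : ((1:ℝ) - β'' = β''*(2 - β'' - τ₂)/(1 - τ₂)) ↔
      (3*β'' + τ₂ - β''^2 - 2*β''*τ₂ - 1 = 0) := by
    rw [eq_div_iff (ne_of_gt hτ)]
    constructor <;> intro h <;> nlinarith [h]
  rw [hiff, div_eq_iff (ne_of_gt hS)]
  constructor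
  · intro h
    have h2 : c * (1 - β'') * (3*β'' + τ₂ - β''^2 - 2*β''*τ₂ - 1) / (1 - 2*β'') = 0 := by
      rw [← key]; linarith
    by_contra hne
    exact (div_ne_zero (mul_ne_zero (mul_ne_zero (ne_of_gt hcpos)
      (by linarith : (1:ℝ) - β'' ≠ 0)) hne) (ne_of_gt h2β)) h2
  · intro h3
    have h2 : Rex - β'' * (Rex + Rot) = 0 := by
      rw [key, h3]; simp
    linarith
end

section
/- Let β'' ∈ (0,1/2), α'' = 1 − β'', and γ₂ ∈ [0,1), and set τ₂ = β'' + γ₂·α''. Then α'' < β''(2 − β'' − τ₂)/(1 − τ₂) if and only if β'' > α''(1 − γ₂)/(2 − γ₂). -/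
theorem profitability_in_terms_of_gamma (β'' : ℝ) (hβ0 : 0 < β'') (hβ1 : β'' < 1/2)
    (α'' : ℝ) (hα : α'' = 1 - β'')
    (γ₂ : ℝ) (hγ0 : 0 ≤ γ₂) (hγ1 : γ₂ < 1)
    (τ₂ : ℝ) (hτ : τ₂ = β'' + γ₂ * α'') :
    α'' < β''*(2 - β'' - τ₂)/(1 - τ₂) ↔ β'' > α''*(1 - γ₂)/(2 - γ₂) := by
  subst hα hτ
  have h1 : (0:ℝ) < 1 - (β'' + γ₂ * (1 - β'')) := by nlinarith
  have h2 : (0:ℝ) < 2 - γ₂ := by linarith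
  rw [lt_div_iff₀ h1, gt_iff_lt, div_lt_iff₀ h2]
  constructor <;> intro h <;> nlinarith [sq_nonneg (1 - β''), sq_nonneg γ₂, mul_pos hβ0 (sub_pos.mpr hγ1)]
end

section
/- Let β'' ∈ (0,1/2), α'' = 1 − β'', γ₂ ∈ [0,1), and set τ₂ = β'' + γ₂·α'', D = 2β''³ − 4β''² + 1, c = (β'' − 2β''²)/D, R_ex = c·(2β''α'' + (τ₂ − β'')α'' + 2β'' + β''²/(α'' − β'')), and R_others = c·((τ₂ − β'')α'' + 2(1 − τ₂)α'' + α''/β''). If β'' ≤ α''(1 − γ₂)/(2 − γ₂), then R_ex/(R_ex + R_others) ≤ β''. -/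
theorem below_threshold_no_profit (β'' : ℝ) (hβ0 : 0 < β'') (hβ1 : β'' < 1/2)
    (α'' : ℝ) (hα : α'' = 1 - β'')
    (γ₂ : ℝ) (hγ0 : 0 ≤ γ₂) (hγ1 : γ₂ < 1)
    (τ₂ : ℝ) (hτ : τ₂ = β'' + γ₂ * α'')
    (D : ℝ) (hD : D = 2*β''^3 - 4*β''^2 + 1)
    (c : ℝ) (hc : c = (β'' - 2*β''^2) / D)
    (Rex Rothers : ℝ)
    (hRex : Rex = c * (2*β''*α'' + (τ₂ - β'')*α'' + 2*β'' + β''^2/(α'' - β'')))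
    (hRothers : Rothers = c * ((τ₂ - β'')*α'' + 2*(1 - τ₂)*α'' + α''/β''))
    (hle : β'' ≤ α''*(1 - γ₂)/(2 - γ₂)) :
    Rex / (Rex + Rothers) ≤ β'' := by
  have hab : (0:ℝ) < α'' - β'' := by rw [hα]; linarith
  have hαpos : (0:ℝ) < α'' := by rw [hα]; linarith
  have hDpos : (0:ℝ) < D := by rw [hD]; nlinarith [sq_nonneg β'', sq_nonneg (β'' - 1/2)]
  have hcpos : (0:ℝ) < c := by
    rw [hc]; apply div_pos _ hDpos; nlinarith
  have hτβ : 0 ≤ τ₂ - β'' := by rw [hτ]; nlinarith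
  have hτ1 : τ₂ ≤ 1 := by rw [hτ, hα]; nlinarith
  have hRexpos : 0 < Rex := by
    rw [hRex]
    apply mul_pos hcpos
    have : 0 < β''^2 / (α'' - β'') := div_pos (by positivity) hab
    nlinarith
  have hRopos : 0 < Rothers := by
    rw [hRothers]
    apply mul_pos hcpos
    have : 0 < α'' / β'' := div_pos hαpos hβ0
    nlinarith
  have hsum : 0 < Rex + Rothers := by linarith
  rw [div_le_iff₀ hsum]
  have hle' : β'' * (2 - γ₂) ≤ α'' * (1 - γ₂) :=
    (le_div_iff₀ (by linarith : (0:ℝ) < 2 - γ₂)).mp hle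
  have key : (1 - β'') * Rex ≤ β'' * Rothers := by
    have inner : (2*β''*α'' + (τ₂ - β'')*α'' + 2*β'' + β''^2/(α'' - β'')) * (1 - β'')
        ≤ ((τ₂ - β'')*α'' + 2*(1 - τ₂)*α'' + α''/β'') * β'' := by
      subst hτ hα
      have h1 : (1 : ℝ) - β'' - β'' ≠ 0 := ne_of_gt hab
      have h2 : β'' ≠ 0 := ne_of_gt hβ0
      rw [← sub_nonneg]
      have expand : ((β'' + γ₂ * (1 - β'') - β'') * (1 - β'') + 2 * (1 - (β'' + γ₂ * (1 - β''))) * (1 - β'') + (1 - β'') / β'') * β''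
          - (2 * β'' * (1 - β'') + (β'' + γ₂ * (1 - β'') - β'') * (1 - β'') + 2 * β'' + β'' ^ 2 / (1 - β'' - β'')) * (1 - β'')
          = (β'' * (1 - β'')^2 * ((1 - β'') * (1 - γ₂) - β'' * (2 - γ₂))) / (β'' * (1 - β'' - β'')) := by
        field_simp
        ring
      rw [expand]
      apply div_nonneg _ (by positivity)
      have hs : 0 ≤ (1 - β'') * (1 - γ₂) - β'' * (2 - γ₂) := by linarith
      positivity
    calc (1 - β'') * Rex
        = c * ((2*β''*α'' + (τ₂ - β'')*α'' + 2*β'' + β''^2/(α'' - β'')) * (1 - β'')) := by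
          rw [hRex]; ring
      _ ≤ c * (((τ₂ - β'')*α'' + 2*(1 - τ₂)*α'' + α''/β'') * β'') :=
          mul_le_mul_of_nonneg_left inner hcpos.le
      _ = β'' * Rothers := by rw [hRothers]; ring
  nlinarith [key, hRexpos]
end

section
/- For x ∈ (0,1/2), define the shrinkage factor ρ(x) = (1 − x) + (x(x − 2x²) + x(1 − x)(x − 2x²))/(2x³ − 4x² + 1). Then for every β' ∈ (0,1/2), every γ₂ ∈ [0,1), and every total computational power C > 0 of the original system, there exists β₂ with ((1 − γ₂)/(2 − γ₂))·ρ(β')·C < β₂ ≤ ((1 − γ₂)/(2 − γ₂))·C; that is, the range of external-attacker computational powers for which the external attacker attacks the weakened original system but would not attack the unweakened one is nonempty. -/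
theorem external_attacker_window_nonempty
    (ρ : ℝ → ℝ)
    (hρ : ∀ x ∈ Set.Ioo (0:ℝ) (1/2),
      ρ x = (1 - x) + (x*(x - 2*x^2) + x*(1 - x)*(x - 2*x^2)) / (2*x^3 - 4*x^2 + 1))
    (β' : ℝ) (hβ0 : 0 < β') (hβ1 : β' < 1/2)
    (γ₂ : ℝ) (hγ0 : 0 ≤ γ₂) (hγ1 : γ₂ < 1)
    (C : ℝ) (hC : 0 < C) :
    ∃ β₂ : ℝ, ((1 - γ₂)/(2 - γ₂)) * ρ β' * C < β₂ ∧ β₂ ≤ ((1 - γ₂)/(2 - γ₂)) * C := by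
  refine ⟨((1 - γ₂)/(2 - γ₂)) * C, ?_, le_refl _⟩
  have hk : 0 < (1 - γ₂)/(2 - γ₂) := by
    apply div_pos <;> linarith
  have hden : 0 < 2*β'^3 - 4*β'^2 + 1 := by nlinarith
  have hρlt : ρ β' < 1 := by
    rw [hρ β' ⟨hβ0, hβ1⟩]
    have h : (β'*(β' - 2*β'^2) + β'*(1 - β')*(β' - 2*β'^2)) / (2*β'^3 - 4*β'^2 + 1) < β' := by
      rw [div_lt_iff₀ hden]; nlinarith [sq_nonneg (1 - β')]
    linarith
  calc ((1 - γ₂)/(2 - γ₂)) * ρ β' * C < ((1 - γ₂)/(2 - γ₂)) * 1 * C := by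
        apply mul_lt_mul_of_pos_right _ hC
        exact mul_lt_mul_of_pos_left hρlt hk
    _ = ((1 - γ₂)/(2 - γ₂)) * C := by ring
end
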